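/- Let (a_i)_{i≥1}, (b_i)_{i≥0}, (λ_i)_{i≥1}, (c_i)_{i≥1} be sequences of complex numbers satisfying the type R_II conditions. Then the set ℬ = {x^n : n ≥ 0} ∪ {Q_n(x) : n ≥ 1} ∪ {x·Q_n(x) : n ≥ 1} is a basis (linearly independent over ℂ and spanning) of the ℂ-subspace W of RatFunc ℂ spanned by {x^n Q_m(x) : n, m ≥ 0}. -/

import Mathlib

open Polynomial

/-- The polynomials `P_n` defined by `P_0 = 1`, `P_1 = x - b_0` and
`P_{n+1} = (x - b_n) P_n - (c_n x² + a_n x + λ_n) P_{n-1}` (so `P_{-1} = 0`). -/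
noncomputable def Ppoly {R : Type*} [CommRing R] (a b lam c : ℕ → R) : ℕ → Polynomial R
  | 0 => 1
  | 1 => X - C (b 0)
  | n + 2 =>
      (X - C (b (n + 1))) * Ppoly a b lam c (n + 1) -
        (C (c (n + 1)) * X ^ 2 + C (a (n + 1)) * X + C (lam (n + 1))) * Ppoly a b lam c n

/-- `d_m(x) = ∏_{i=1}^m (c_i x² + a_i x + λ_i)`, with `d_0 = 1`. -/
noncomputable def dpoly {R : Type*} [CommRing R] (a lam c : ℕ → R) (m : ℕ) : Polynomial R :=
  ∏ i ∈ Finset.range m, (C (c (i + 1)) * X ^ 2 + C (a (i + 1)) * X + C (lam (i + 1)))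
/-- `Q_m = P_m / d_m` as an element of the field `RatFunc ℂ`. -/
noncomputable def Qfun (a b lam c : ℕ → ℂ) (m : ℕ) : RatFunc ℂ :=
  algebraMap (Polynomial ℂ) (RatFunc ℂ) (Ppoly a b lam c m) /
    algebraMap (Polynomial ℂ) (RatFunc ℂ) (dpoly a lam c m)

/-- `W`, the ℂ-subspace of `RatFunc ℂ` spanned by `{x^n Q_m : n, m ≥ 0}`. -/
noncomputable def Wspace (a b lam c : ℕ → ℂ) : Submodule ℂ (RatFunc ℂ) :=
  Submodule.span ℂ {f | ∃ n m : ℕ, f = RatFunc.X ^ n * Qfun a b lam c m}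

/-- `W'`, the ℂ-subspace of `RatFunc ℂ` spanned by `{x^n / d_m : n, m ≥ 0}`. -/
noncomputable def W'space (a lam c : ℕ → ℂ) : Submodule ℂ (RatFunc ℂ) :=
  Submodule.span ℂ
    {f | ∃ n m : ℕ, f = RatFunc.X ^ n / algebraMap (Polynomial ℂ) (RatFunc ℂ) (dpoly a lam c m)}

/-- The type `R_II` conditions: for every `n ≥ 1`, `c_n ≠ 0` and `P_n(z) ≠ 0` for every
root `z` of `c_n x² + a_n x + λ_n`. -/
def RIIConds (a b lam c : ℕ → ℂ) : Prop :=
  ∀ n : ℕ, 1 ≤ n → c n ≠ 0 ∧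
    ∀ z : ℂ, c n * z ^ 2 + a n * z + lam n = 0 →
      Polynomial.eval z (Ppoly a b lam c n) ≠ 0

/-- The family `ℬ = {x^n : n ≥ 0} ∪ {Q_m : m ≥ 1} ∪ {x Q_m : m ≥ 1}`,
indexed by `ℕ ⊕ (ℕ ⊕ ℕ)` (the last two components shifted by one). -/
noncomputable def Bfam (a b lam c : ℕ → ℂ) : ℕ ⊕ (ℕ ⊕ ℕ) → RatFunc ℂ
  | .inl n => RatFunc.X ^ n
  | .inr (.inl m) => Qfun a b lam c (m + 1)
  | .inr (.inr m) => RatFunc.X * Qfun a b lam c (m + 1)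
namespace StmtAux
open Polynomial

variable (a b lam c : ℕ → ℂ)

/-- the quadratic factor -/
noncomputable def qp (j : ℕ) : Polynomial ℂ :=
  C (c j) * X ^ 2 + C (a j) * X + C (lam j)

variable {a b lam c}

lemma qp_ne_zero {j : ℕ} (hc : c j ≠ 0) : qp a lam c j ≠ 0 := by
  intro h0
  have : (qp a lam c j).coeff 2 = 0 := by rw [h0]; simp
  simp [qp, coeff_add, coeff_C_mul, coeff_X_pow, coeff_C, coeff_X] at this
  exact hc this

lemma qp_degree {j : ℕ} (hc : c j ≠ 0) : (qp a lam c j).degree = 2 :=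
  degree_quadratic hc

lemma dpoly_eq (m : ℕ) : dpoly a lam c m = ∏ i ∈ Finset.range m, qp a lam c (i + 1) := rfl

lemma dpoly_succ (m : ℕ) :
    dpoly a lam c (m + 1) = dpoly a lam c m * qp a lam c (m + 1) := by
  rw [dpoly_eq, dpoly_eq, Finset.prod_range_succ]

lemma dpoly_ne_zero (hc : ∀ j, 1 ≤ j → c j ≠ 0) (m : ℕ) : dpoly a lam c m ≠ 0 := by
  rw [dpoly_eq]
  exact Finset.prod_ne_zero_iff.2 fun i _ => qp_ne_zero (hc (i + 1) (by omega))

end StmtAux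
namespace StmtAux
open Polynomial

variable {a b lam c : ℕ → ℂ}

local notation "ℓ" => algebraMap (Polynomial ℂ) (RatFunc ℂ)

lemma Q_mul_d (hc : ∀ j, 1 ≤ j → c j ≠ 0) (m : ℕ) :
    Qfun a b lam c m * ℓ (dpoly a lam c m) = ℓ (Ppoly a b lam c m) := by
  rw [Qfun, div_mul_cancel₀]
  exact RatFunc.algebraMap_ne_zero (dpoly_ne_zero hc m)

lemma rec_one (hc : ∀ j, 1 ≤ j → c j ≠ 0) :
    ℓ (qp a lam c 1) * Qfun a b lam c 1 = ℓ (X - C (b 0)) := by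
  have h1 : dpoly a lam c 1 = qp a lam c 1 := by
    rw [dpoly_eq, Finset.prod_range_one]
  rw [Qfun, h1, mul_div_assoc', mul_comm, mul_div_assoc, div_self
    (RatFunc.algebraMap_ne_zero (qp_ne_zero (hc 1 le_rfl))), mul_one]
  rfl

lemma rec_succ (hc : ∀ j, 1 ≤ j → c j ≠ 0) (m : ℕ) :
    ℓ (qp a lam c (m + 2)) * Qfun a b lam c (m + 2) =
      (RatFunc.X - ℓ (C (b (m + 1)))) * Qfun a b lam c (m + 1) - Qfun a b lam c m := by
  have hd0 : ℓ (dpoly a lam c m) ≠ 0 :=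
    RatFunc.algebraMap_ne_zero (dpoly_ne_zero hc m)
  have hq1 : ℓ (qp a lam c (m + 1)) ≠ 0 :=
    RatFunc.algebraMap_ne_zero (qp_ne_zero (hc (m + 1) (by omega)))
  have hq2 : ℓ (qp a lam c (m + 2)) ≠ 0 :=
    RatFunc.algebraMap_ne_zero (qp_ne_zero (hc (m + 2) (by omega)))
  have hP : Ppoly a b lam c (m + 2) =
      (X - C (b (m + 1))) * Ppoly a b lam c (m + 1) -
        qp a lam c (m + 1) * Ppoly a b lam c m := rfl
  have hX : RatFunc.X = ℓ X := (RatFunc.algebraMap_X).symm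
  rw [Qfun, Qfun, Qfun, hP, dpoly_succ, dpoly_succ, hX]
  simp only [map_mul, map_sub]
  field_simp

end StmtAux
namespace StmtAux
open Polynomial

variable {a b lam c : ℕ → ℂ}

lemma eval_qp (j : ℕ) (z : ℂ) :
    (qp a lam c j).eval z = c j * z ^ 2 + a j * z + lam j := by
  simp [qp]

lemma coprime_qp_P (h : RIIConds a b lam c) {n : ℕ} (hn : 1 ≤ n) :
    IsCoprime (qp a lam c n) (Ppoly a b lam c n) := by
  classical
  rw [← EuclideanDomain.gcd_isUnit_iff]
  by_contra hu
  set g := EuclideanDomain.gcd (qp a lam c n) (Ppoly a b lam c n) with hg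
  have hgq : g ∣ qp a lam c n := EuclideanDomain.gcd_dvd_left _ _
  have hgp : g ∣ Ppoly a b lam c n := EuclideanDomain.gcd_dvd_right _ _
  have hg0 : g ≠ 0 := by
    intro h0
    exact qp_ne_zero (h n hn).1 (by simpa [h0] using hgq)
  have hdeg : g.degree ≠ 0 := fun hd => hu (isUnit_iff_degree_eq_zero.2 hd)
  obtain ⟨z, hz⟩ := Complex.exists_root (degree_pos_of_ne_zero_of_nonunit hg0 hu)
  have hzq : (qp a lam c n).eval z = 0 := by
    obtain ⟨k, hk⟩ := hgq
    rw [hk, eval_mul, hz, zero_mul]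
  have hzp : (Ppoly a b lam c n).eval z = 0 := by
    obtain ⟨k, hk⟩ := hgp
    rw [hk, eval_mul, hz, zero_mul]
  exact (h n hn).2 z (by rw [← eval_qp]; exact hzq) hzp

end StmtAux
namespace StmtAux
open Polynomial

variable {a b lam c : ℕ → ℂ}

local notation "ℓ" => algebraMap (Polynomial ℂ) (RatFunc ℂ)

lemma dpoly_add (m k : ℕ) :
    dpoly a lam c (m + k) = dpoly a lam c m * ∏ i ∈ Finset.range k, qp a lam c (m + i + 1) := by
  rw [dpoly_eq, dpoly_eq, Finset.prod_range_add]

variable (a b lam c)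

/-- auxiliary cofactor polynomials -/
noncomputable def rp (M : ℕ) : ℕ ⊕ (ℕ ⊕ ℕ) → Polynomial ℂ
  | .inl n => X ^ n * dpoly a lam c M
  | .inr (.inl m) =>
      Ppoly a b lam c (m + 1) * ∏ i ∈ Finset.range (M - 1 - m), qp a lam c (m + 1 + i + 1)
  | .inr (.inr m) =>
      X * (Ppoly a b lam c (m + 1) * ∏ i ∈ Finset.range (M - 1 - m), qp a lam c (m + 1 + i + 1))

/-- the "index bound" predicate -/
def low (M : ℕ) : ℕ ⊕ (ℕ ⊕ ℕ) → Prop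
  | .inl _ => True
  | .inr (.inl m) => m < M
  | .inr (.inr m) => m < M

variable {a b lam c}

lemma Q_mul_d_high (hc : ∀ j, 1 ≤ j → c j ≠ 0) {m M : ℕ} (hm : m < M) :
    Qfun a b lam c (m + 1) * ℓ (dpoly a lam c (M + 1)) =
      ℓ (qp a lam c (M + 1) *
        (Ppoly a b lam c (m + 1) * ∏ i ∈ Finset.range (M - 1 - m), qp a lam c (m + 1 + i + 1))) := by
  have h1 : M + 1 = (m + 1) + (M - m) := by omega
  have h2 : M - m = (M - 1 - m) + 1 := by omega
  have h3 : m + 1 + (M - 1 - m) + 1 = M + 1 := by omega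
  have hd : dpoly a lam c (M + 1) = dpoly a lam c (m + 1) *
      ((∏ i ∈ Finset.range (M - 1 - m), qp a lam c (m + 1 + i + 1)) * qp a lam c (M + 1)) := by
    rw [h1, dpoly_add, h2, Finset.prod_range_succ]
    congr 3
  rw [hd, map_mul, ← mul_assoc, Q_mul_d hc, ← map_mul]
  congr 1
  ring

lemma Bfam_mul_d (hc : ∀ j, 1 ≤ j → c j ≠ 0) {M : ℕ} {i : ℕ ⊕ (ℕ ⊕ ℕ)}
    (hi : low M i) :
    Bfam a b lam c i * ℓ (dpoly a lam c (M + 1)) = ℓ (qp a lam c (M + 1) * rp a b lam c M i) := by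
  match i with
  | .inl n =>
      rw [Bfam, rp, dpoly_succ, ← RatFunc.algebraMap_X, ← map_pow, ← map_mul]
      congr 1
      ring
  | .inr (.inl m) =>
      exact Q_mul_d_high hc hi
  | .inr (.inr m) =>
      rw [Bfam, rp, mul_assoc, Q_mul_d_high hc hi, ← RatFunc.algebraMap_X, ← map_mul]
      refine congrArg (algebraMap (Polynomial ℂ) (RatFunc ℂ)) ?_
      ring

end StmtAux
namespace StmtAux
open Polynomial

variable {a b lam c : ℕ → ℂ}

local notation "ℓ" => algebraMap (Polynomial ℂ) (RatFunc ℂ)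

lemma lin_indep_pows : LinearIndependent ℂ (fun n : ℕ => (RatFunc.X : RatFunc ℂ) ^ n) := by
  have h1 : LinearIndependent ℂ (fun n : ℕ => (X : Polynomial ℂ) ^ n) := by
    have := (Polynomial.basisMonomials ℂ).linearIndependent
    simpa [Polynomial.X_pow_eq_monomial, Polynomial.coe_basisMonomials] using this
  have h2 := h1.map' ((Algebra.linearMap (Polynomial ℂ) (RatFunc ℂ)).restrictScalars ℂ)
      (LinearMap.ker_eq_bot.2 (by exact RatFunc.algebraMap_injective ℂ))
  have h3 : (Algebra.linearMap (Polynomial ℂ) (RatFunc ℂ)) ∘ (fun n : ℕ => (X : Polynomial ℂ) ^ n)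
      = fun n : ℕ => (RatFunc.X : RatFunc ℂ) ^ n := by
    funext n
    simp [map_pow]
  rw [← h3]
  exact h2

lemma linear_eq_zero_of_top (h : RIIConds a b lam c) (M : ℕ) (S : Polynomial ℂ) (β γ : ℂ)
    (heq : qp a lam c (M + 1) * S + (C β + C γ * X) * Ppoly a b lam c (M + 1) = 0) :
    β = 0 ∧ γ = 0 := by
  have hc : c (M + 1) ≠ 0 := (h (M + 1) (by omega)).1
  have hdvd : qp a lam c (M + 1) ∣ (C β + C γ * X) * Ppoly a b lam c (M + 1) :=
    ⟨-S, by linear_combination heq⟩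
  have hdvd2 : qp a lam c (M + 1) ∣ (C β + C γ * X) :=
    (coprime_qp_P h (by omega)).dvd_of_dvd_mul_right hdvd
  have h0 : (C β + C γ * X : Polynomial ℂ) = 0 := by
    refine Polynomial.eq_zero_of_dvd_of_degree_lt hdvd2 ?_
    have h1 : degree (C β + C γ * X : Polynomial ℂ) ≤ 1 := by
      rw [add_comm]; exact degree_linear_le
    rw [qp_degree hc]
    exact lt_of_le_of_lt h1 (by norm_num)
  constructor
  · have := congrArg (fun p => coeff p 0) h0; simpa using this
  · have := congrArg (fun p => coeff p 1) h0; simpa using this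

lemma aux_indep (h : RIIConds a b lam c) :
    ∀ M : ℕ, ∀ s : Finset (ℕ ⊕ (ℕ ⊕ ℕ)), ∀ g : (ℕ ⊕ (ℕ ⊕ ℕ)) → ℂ,
      (∀ m, Sum.inr (Sum.inl m) ∈ s → m < M) →
      (∀ m, Sum.inr (Sum.inr m) ∈ s → m < M) →
      ∑ i ∈ s, g i • Bfam a b lam c i = 0 → ∀ i ∈ s, g i = 0 := by
  classical
  have hc : ∀ j, 1 ≤ j → c j ≠ 0 := fun j hj => (h j hj).1
  intro M
  induction M with
  | zero =>
      intro s g h1 h2 hsum i hi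
      have hs : ∀ j ∈ s, ∃ n, j = Sum.inl n := by
        intro j hj
        match j with
        | .inl n => exact ⟨n, rfl⟩
        | .inr (.inl m) => exact absurd (h1 m hj) (by omega)
        | .inr (.inr m) => exact absurd (h2 m hj) (by omega)
      set t : Finset ℕ := s.preimage Sum.inl (Sum.inl_injective.injOn) with ht
      have hseq : s = t.map ⟨Sum.inl, Sum.inl_injective⟩ := by
        ext j
        constructor
        · intro hj
          obtain ⟨n, rfl⟩ := hs j hj
          simp [ht, Finset.mem_preimage, hj]
        · intro hj
          simp only [Finset.mem_map, Function.Embedding.coeFn_mk] at hj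
          obtain ⟨n, hn, rfl⟩ := hj
          simpa [ht, Finset.mem_preimage] using hn
      rw [hseq, Finset.sum_map] at hsum
      have := linearIndependent_iff'.mp lin_indep_pows t (fun n => g (Sum.inl n)) hsum
      obtain ⟨n, rfl⟩ := hs i hi
      exact this n (by simpa [ht, Finset.mem_preimage] using hi)
  | succ M IH =>
      intro s g h1 h2 hsum i hi
      set iA : ℕ ⊕ (ℕ ⊕ ℕ) := Sum.inr (Sum.inl M) with hiA
      set iB : ℕ ⊕ (ℕ ⊕ ℕ) := Sum.inr (Sum.inr M) with hiB
      have hABne : iA ≠ iB := by simp [hiA, hiB]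
      set T : Finset (ℕ ⊕ (ℕ ⊕ ℕ)) := (s.erase iA).erase iB with hT
      set β : ℂ := if iA ∈ s then g iA else 0 with hβ
      set γ : ℂ := if iB ∈ s then g iB else 0 with hγ
      have hsplit : ∀ f : (ℕ ⊕ (ℕ ⊕ ℕ)) → RatFunc ℂ,
          ∑ i ∈ s, f i = (∑ i ∈ T, f i) +
            ((if iA ∈ s then f iA else 0) + (if iB ∈ s then f iB else 0)) := by
        intro f
        have e1 : ∑ i ∈ s, f i = (∑ i ∈ s.erase iA, f i) + (if iA ∈ s then f iA else 0) := by
          by_cases hA : iA ∈ s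
          · rw [if_pos hA, Finset.sum_erase_add s f hA]
          · rw [if_neg hA, Finset.erase_eq_of_notMem hA, add_zero]
        have e2 : ∑ i ∈ s.erase iA, f i = (∑ i ∈ T, f i) + (if iB ∈ s then f iB else 0) := by
          by_cases hB : iB ∈ s.erase iA
          · rw [if_pos ((Finset.mem_erase.mp hB).2), hT, Finset.sum_erase_add _ f hB]
          · have : ¬ (iB ∈ s) ∨ (iB ∈ s ∧ iB = iA) := by
              by_cases hBs : iB ∈ s
              · right; exact ⟨hBs, by
                  by_contra hne
                  exact hB (Finset.mem_erase.mpr ⟨hne, hBs⟩)⟩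
              · left; exact hBs
            rcases this with hB' | ⟨_, hBA⟩
            · rw [if_neg hB', hT, Finset.erase_eq_of_notMem hB, add_zero]
            · exact absurd hBA.symm hABne
        rw [e1, e2]
        ring
      have key : (∑ i ∈ T, g i • Bfam a b lam c i) +
          (β • Qfun a b lam c (M + 1) + γ • (RatFunc.X * Qfun a b lam c (M + 1))) = 0 := by
        rw [← hsum, hsplit (fun i => g i • Bfam a b lam c i)]
        congr 1
        congr 1
        · by_cases hA : iA ∈ s <;> simp [hβ, hA, hiA, Bfam]
        · by_cases hB : iB ∈ s <;> simp [hγ, hB, hiB, Bfam]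
      -- multiply by ℓ (dpoly (M+1))
      have hTlow : ∀ i ∈ T, low M i := by
        intro i hiT
        have his : i ∈ s := Finset.mem_of_mem_erase (Finset.mem_of_mem_erase hiT)
        match i with
        | .inl n => trivial
        | .inr (.inl m) =>
            have : m < M + 1 := h1 m his
            have hne : (Sum.inr (Sum.inl m) : ℕ ⊕ (ℕ ⊕ ℕ)) ≠ iA :=
              (Finset.mem_erase.mp (Finset.mem_of_mem_erase hiT)).1
            have : m ≠ M := fun hm => hne (by rw [hm])
            show m < M
            omega
        | .inr (.inr m) =>
            have : m < M + 1 := h2 m his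
            have hne : (Sum.inr (Sum.inr m) : ℕ ⊕ (ℕ ⊕ ℕ)) ≠ iB :=
              (Finset.mem_erase.mp hiT).1
            have : m ≠ M := fun hm => hne (by rw [hm])
            show m < M
            omega
      have hsm : ∀ (z : ℂ) (p : Polynomial ℂ), z • (ℓ p) = ℓ (z • p) := by
        intro z p
        rw [Algebra.smul_def, Algebra.smul_def, map_mul, ← IsScalarTower.algebraMap_apply]
      have hmul := congrArg (fun f => f * ℓ (dpoly a lam c (M + 1))) key
      simp only [add_mul, Finset.sum_mul, smul_mul_assoc, zero_mul, mul_assoc] at hmul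
      rw [Finset.sum_congr rfl (fun i hiT => by
        rw [Bfam_mul_d hc (hTlow i hiT), hsm])] at hmul
      rw [Q_mul_d hc (M + 1)] at hmul
      rw [← RatFunc.algebraMap_X, ← map_mul, hsm, hsm, ← map_sum, ← map_add, ← map_add] at hmul
      have hpoly : (∑ i ∈ T, g i • (qp a lam c (M + 1) * rp a b lam c M i)) +
          (β • Ppoly a b lam c (M + 1) + γ • (X * Ppoly a b lam c (M + 1))) = 0 :=
        RatFunc.algebraMap_injective ℂ (by rw [hmul, map_zero])
      have hpoly2 : qp a lam c (M + 1) * (∑ i ∈ T, g i • rp a b lam c M i) +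
          (C β + C γ * X) * Ppoly a b lam c (M + 1) = 0 := by
        rw [Finset.mul_sum]
        rw [← hpoly]
        congr 1
        · exact Finset.sum_congr rfl fun i _ => by rw [mul_smul_comm]
        · simp [Polynomial.smul_eq_C_mul]
          ring
      obtain ⟨hβ0, hγ0⟩ := linear_eq_zero_of_top h M _ β γ hpoly2
      -- now the T part
      have hTsum : ∑ i ∈ T, g i • Bfam a b lam c i = 0 := by
        rw [hβ0, hγ0] at key
        simpa using key
      have hTzero := IH T g
        (fun m hm => by
           have := hTlow _ hm
           exact this)
        (fun m hm => by
           have := hTlow _ hm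
           exact this)
        hTsum
      by_cases hA : i = iA
      · have hiAs : iA ∈ s := hA ▸ hi
        have hgb : g iA = β := by rw [hβ, if_pos hiAs]
        rw [hA, hgb, hβ0]
      · by_cases hB : i = iB
        · have hiBs : iB ∈ s := hB ▸ hi
          have hgg : g iB = γ := by rw [hγ, if_pos hiBs]
          rw [hB, hgg, hγ0]
        · exact hTzero i (Finset.mem_erase.mpr ⟨hB, Finset.mem_erase.mpr ⟨hA, hi⟩⟩)

end StmtAux
namespace StmtAux
open Polynomial

variable {a b lam c : ℕ → ℂ}

local notation "ℓ" => algebraMap (Polynomial ℂ) (RatFunc ℂ)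

lemma Q_zero : Qfun a b lam c 0 = 1 := by
  rw [Qfun, show Ppoly a b lam c 0 = 1 from rfl,
    show dpoly a lam c 0 = 1 from Finset.prod_range_zero _, map_one, div_one]

lemma halg (z : ℂ) : algebraMap ℂ (RatFunc ℂ) z = ℓ (C z) := by
  rw [← Polynomial.algebraMap_eq, ← IsScalarTower.algebraMap_apply]

lemma pow_mul_Q_mem (h : RIIConds a b lam c) (m : ℕ) :
    ∀ n : ℕ, RatFunc.X ^ n * Qfun a b lam c m ∈
      Submodule.span ℂ (Set.range (Bfam a b lam c)) := by
  have hc : ∀ j, 1 ≤ j → c j ≠ 0 := fun j hj => (h j hj).1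
  induction m using Nat.strong_induction_on with
  | _ m IHm =>
    match m with
    | 0 =>
        intro n
        rw [Q_zero, mul_one]
        exact Submodule.subset_span ⟨Sum.inl n, rfl⟩
    | (k + 1) =>
      intro n
      induction n using Nat.strong_induction_on with
      | _ n IHn =>
        match n with
        | 0 =>
            rw [pow_zero, one_mul]
            exact Submodule.subset_span ⟨Sum.inr (Sum.inl k), rfl⟩
        | 1 =>
            rw [pow_one]
            exact Submodule.subset_span ⟨Sum.inr (Sum.inr k), rfl⟩
        | (n + 2) =>
          have hcz : c (k + 1) ≠ 0 := hc (k + 1) (by omega)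
          match k with
          | 0 =>
              -- m = 1, use rec_one
              have hrec := rec_one (a := a) (b := b) (lam := lam) (c := c) hc
              have hkey : RatFunc.X ^ (n + 2) * Qfun a b lam c 1 =
                  (c 1)⁻¹ • (RatFunc.X ^ (n + 1) * Qfun a b lam c 0 +
                    (-(b 0)) • (RatFunc.X ^ n * Qfun a b lam c 0) +
                    (-(a 1)) • (RatFunc.X ^ (n + 1) * Qfun a b lam c 1) +
                    (-(lam 1)) • (RatFunc.X ^ n * Qfun a b lam c 1)) := by
                rw [eq_inv_smul_iff₀ hcz]
                simp only [qp, map_add, map_mul, map_pow, map_sub, RatFunc.algebraMap_X] at hrec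
                simp only [Algebra.smul_def, halg, Q_zero, mul_one, map_neg, map_one]
                linear_combination (RatFunc.X : RatFunc ℂ) ^ n * hrec
              rw [hkey]
              refine Submodule.smul_mem _ _ ?_
              refine Submodule.add_mem _ (Submodule.add_mem _ (Submodule.add_mem _
                (IHm 0 (by omega) (n + 1)) (Submodule.smul_mem _ _ (IHm 0 (by omega) n)))
                (Submodule.smul_mem _ _ (IHn (n + 1) (by omega)))) ?_
              exact Submodule.smul_mem _ _ (IHn n (by omega))
          | (j + 1) =>
              -- m = j + 2, use rec_succ
              have hcz2 : c (j + 2) ≠ 0 := hc (j + 2) (by omega)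
              have hrec := rec_succ (a := a) (b := b) (lam := lam) (c := c) hc j
              have hkey : RatFunc.X ^ (n + 2) * Qfun a b lam c (j + 2) =
                  (c (j + 2))⁻¹ • (RatFunc.X ^ (n + 1) * Qfun a b lam c (j + 1) +
                    (-(b (j + 1))) • (RatFunc.X ^ n * Qfun a b lam c (j + 1)) +
                    (-1 : ℂ) • (RatFunc.X ^ n * Qfun a b lam c j) +
                    (-(a (j + 2))) • (RatFunc.X ^ (n + 1) * Qfun a b lam c (j + 2)) +
                    (-(lam (j + 2))) • (RatFunc.X ^ n * Qfun a b lam c (j + 2))) := by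
                rw [eq_inv_smul_iff₀ hcz2]
                simp only [qp, map_add, map_mul, map_pow, map_sub, RatFunc.algebraMap_X] at hrec
                simp only [Algebra.smul_def, halg, map_neg, map_one]
                linear_combination (RatFunc.X : RatFunc ℂ) ^ n * hrec
              rw [hkey]
              refine Submodule.smul_mem _ _ ?_
              refine Submodule.add_mem _ (Submodule.add_mem _ (Submodule.add_mem _
                (Submodule.add_mem _ (IHm (j + 1) (by omega) (n + 1))
                  (Submodule.smul_mem _ _ (IHm (j + 1) (by omega) n)))
                (Submodule.smul_mem _ _ (IHm j (by omega) n)))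
                (Submodule.smul_mem _ _ (IHn (n + 1) (by omega)))) ?_
              exact Submodule.smul_mem _ _ (IHn n (by omega))

end StmtAux
/-- For sequences satisfying the type `R_II` conditions, the set
`ℬ = {x^n : n ≥ 0} ∪ {Q_n : n ≥ 1} ∪ {x·Q_n : n ≥ 1}` is a basis (linearly independent
over ℂ and spanning) of the ℂ-subspace `W` of `RatFunc ℂ` spanned by
`{x^n Q_m : n, m ≥ 0}`. -/
theorem stmt2 (a b lam c : ℕ → ℂ) (h : RIIConds a b lam c) :
    LinearIndependent ℂ (Bfam a b lam c) ∧
      Submodule.span ℂ (Set.range (Bfam a b lam c)) = Wspace a b lam c := by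
  classical
  constructor
  · rw [linearIndependent_iff']
    intro s g hsum i hi
    set idx : ℕ ⊕ (ℕ ⊕ ℕ) → ℕ := fun j => match j with
      | .inl _ => 0
      | .inr (.inl m) => m + 1
      | .inr (.inr m) => m + 1 with hidx
    refine StmtAux.aux_indep h (s.sup idx) s g ?_ ?_ hsum i hi
    · intro m hm
      have h' : m + 1 ≤ s.sup idx := Finset.le_sup (f := idx) hm
      omega
    · intro m hm
      have h' : m + 1 ≤ s.sup idx := Finset.le_sup (f := idx) hm
      omega
  · apply le_antisymm
    · rw [Submodule.span_le, Wspace]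
      rintro f ⟨i, rfl⟩
      match i with
      | .inl n =>
          exact Submodule.subset_span ⟨n, 0, by simp [StmtAux.Q_zero, Bfam]⟩
      | .inr (.inl m) =>
          exact Submodule.subset_span ⟨0, m + 1, by simp [Bfam]⟩
      | .inr (.inr m) =>
          exact Submodule.subset_span ⟨1, m + 1, by simp [Bfam]⟩
    · rw [Wspace, Submodule.span_le]
      rintro f ⟨n, m, rfl⟩
      exact StmtAux.pow_mul_Q_mem h m n
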